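/- arXiv:1207.4766 — 3 statements merged into one kernel-verified Lean document; each statement's English description precedes it below -/
import Mathlib

section
/- Given γr, γp, kp > 0, the matrix M = [[-γr, -k₁, k₂], [kp, -γp, 0], [0, -1, 0]] is Hurwitz if and only if k₂ > 0 and k₁ > k₂/(γp+γr) - γpγr/kp. -/
open Matrix

/-- A real square matrix is Hurwitz if every eigenvalue (element of its complex
spectrum) has strictly negative real part. -/
def IsHurwitz {n : ℕ} (A : Matrix (Fin n) (Fin n) ℝ) : Prop :=
  ∀ z ∈ spectrum ℂ (A.map (Complex.ofReal)), z.re < 0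

/-!
The characteristic polynomial of the matrix is `s³ + (γr + γp) s² + (γp γr + kp k₁) s + kp k₂`,
so the claim is the Routh–Hurwitz criterion for this cubic, rewritten in terms of the gains.
For the criterion, split off a real root `r` (intermediate value theorem):
`s³ + a₂ s² + a₁ s + a₀ = (s - r) (s² + b s + c)`. The roots of the real quadratic factor lie in
the open left half-plane iff `b, c > 0`, and `a₂ a₁ - a₀ = b (c + r (r - b))` shows that
`r < 0 ∧ b > 0 ∧ c > 0` is equivalent to `a₂ > 0 ∧ a₀ > 0 ∧ a₂ a₁ > a₀`.
-/

def RouthHurwitzCubic (a₂ a₁ a₀ : ℝ) : Prop :=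
  0 < a₂ ∧ 0 < a₀ ∧ a₀ < a₂ * a₁

theorem cubic_pos_of_one_add_abs_le {a₂ a₁ a₀ M : ℝ} (hM : 1 + |a₂| + |a₁| + |a₀| ≤ M) :
    0 < M ^ 3 + a₂ * M ^ 2 + a₁ * M + a₀ := by
  have hM₁ : 1 ≤ M := by linarith [abs_nonneg a₂, abs_nonneg a₁, abs_nonneg a₀]
  have hsq : M ≤ M ^ 2 := by nlinarith
  have h₂ : -|a₂| * M ^ 2 ≤ a₂ * M ^ 2 := by nlinarith [neg_abs_le a₂, sq_nonneg M]
  have h₁ : -|a₁| * M ^ 2 ≤ a₁ * M := by nlinarith [neg_abs_le a₁, abs_nonneg a₁]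
  have h₀ : -|a₀| * M ^ 2 ≤ a₀ := by nlinarith [neg_abs_le a₀, abs_nonneg a₀]
  nlinarith

theorem exists_real_root_cubic (a₂ a₁ a₀ : ℝ) :
    ∃ r : ℝ, r ^ 3 + a₂ * r ^ 2 + a₁ * r + a₀ = 0 := by
  set M := 1 + |a₂| + |a₁| + |a₀|
  have hpos : 0 < M ^ 3 + a₂ * M ^ 2 + a₁ * M + a₀ := cubic_pos_of_one_add_abs_le le_rfl
  have hneg : 0 < M ^ 3 + -a₂ * M ^ 2 + a₁ * M + -a₀ :=
    cubic_pos_of_one_add_abs_le (by simp only [abs_neg, M, le_refl])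
  have hcont : Continuous fun t : ℝ => t ^ 3 + a₂ * t ^ 2 + a₁ * t + a₀ := by fun_prop
  exact intermediate_value_univ (-M) M hcont ⟨by linarith, by linarith⟩

theorem Complex.exists_add_eq_and_mul_eq (b c : ℂ) : ∃ u v : ℂ, u + v = -b ∧ u * v = c := by
  obtain ⟨s, hs⟩ := IsAlgClosed.exists_eq_mul_self (b ^ 2 - 4 * c)
  exact ⟨(-b + s) / 2, (-b - s) / 2, by ring, by linear_combination hs / 4⟩

theorem re_neg_and_re_neg_iff_of_add_eq_of_mul_eq {u v : ℂ} {b c : ℝ} (hsum : u + v = -b)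
    (hprod : u * v = c) :
    (u.re < 0 ∧ v.re < 0) ↔ (0 < b ∧ 0 < c) := by
  have hre : u.re + v.re = -b := by simpa using congrArg Complex.re hsum
  have him : u.im + v.im = 0 := by simpa using congrArg Complex.im hsum
  have hre' : u.re * v.re - u.im * v.im = c := by simpa using congrArg Complex.re hprod
  have him' : u.re * v.im + u.im * v.re = 0 := by simpa using congrArg Complex.im hprod
  have hreal_or_conj : u.im = 0 ∨ u.re = v.re := by
    have : u.im * (v.re - u.re) = 0 := by linear_combination him' - u.re * him
    rcases mul_eq_zero.mp this with h | h
    · exact Or.inl h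
    · exact Or.inr (by linarith)
  rcases hreal_or_conj with hu | hconj
  · have hv : v.im = 0 := by linarith
    rw [hu, hv] at hre'
    constructor
    · rintro ⟨hu', hv'⟩
      exact ⟨by linarith, by nlinarith⟩
    · rintro ⟨hb, hc⟩
      constructor <;> nlinarith
  · have hv : v.im = -u.im := by linarith
    rw [← hconj, hv] at hre'
    constructor
    · rintro ⟨hu', -⟩
      exact ⟨by linarith, by nlinarith [mul_pos_of_neg_of_neg hu' hu', mul_self_nonneg u.im]⟩
    · rintro ⟨hb, -⟩
      constructor <;> linarith

theorem routhHurwitzCubic_iff_of_factor {a₂ a₁ a₀ r b c : ℝ}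
    (h₂ : a₂ = b - r) (h₁ : a₁ = c - r * b) (h₀ : a₀ = -(r * c)) :
    RouthHurwitzCubic a₂ a₁ a₀ ↔ r < 0 ∧ 0 < b ∧ 0 < c := by
  subst h₂ h₁ h₀
  unfold RouthHurwitzCubic
  constructor
  · rintro ⟨h₂, h₀, hrh⟩
    have hrh' : 0 < b * (c + r * (r - b)) := by linarith
    have hr : r < 0 := by
      by_contra! hr
      have hc : c < 0 := by nlinarith
      have hb : 0 < b := by linarith
      nlinarith [mul_nonneg hr (show 0 ≤ b - r by linarith)]
    have hc : 0 < c := by nlinarith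
    refine ⟨hr, ?_, hc⟩
    by_contra! hb
    nlinarith [mul_pos_of_neg_of_neg hr (show r - b < 0 by linarith)]
  · rintro ⟨hr, hb, hc⟩
    refine ⟨by linarith, by nlinarith, ?_⟩
    nlinarith [mul_pos hb hc, mul_pos_of_neg_of_neg hr (show r - b < 0 by linarith)]

theorem forall_cubic_root_re_neg_iff (a₂ a₁ a₀ : ℝ) :
    (∀ w : ℂ, w ^ 3 + a₂ * w ^ 2 + a₁ * w + a₀ = 0 → w.re < 0) ↔ RouthHurwitzCubic a₂ a₁ a₀ := by
  obtain ⟨r, hr⟩ := exists_real_root_cubic a₂ a₁ a₀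
  obtain ⟨u, v, hsum, hprod⟩ :=
    Complex.exists_add_eq_and_mul_eq ((a₂ + r : ℝ) : ℂ) ((a₁ + r * (a₂ + r) : ℝ) : ℂ)
  have hfactor (w : ℂ) : w ^ 3 + a₂ * w ^ 2 + a₁ * w + a₀ = (w - r) * (w - u) * (w - v) := by
    have hrC : (r : ℂ) ^ 3 + a₂ * r ^ 2 + a₁ * r + a₀ = 0 := by exact_mod_cast hr
    push_cast at hsum hprod
    linear_combination hrC + (w - r) * w * hsum - (w - r) * hprod
  simp only [hfactor, mul_eq_zero, sub_eq_zero, or_imp, forall_and, forall_eq, Complex.ofReal_re]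
  rw [routhHurwitzCubic_iff_of_factor (r := r) (b := a₂ + r) (c := a₁ + r * (a₂ + r))
      (by ring) (by ring) (by linear_combination hr),
    ← re_neg_and_re_neg_iff_of_add_eq_of_mul_eq hsum hprod, and_assoc]

def piClosedLoopMatrix (γr γp kp k₁ k₂ : ℝ) : Matrix (Fin 3) (Fin 3) ℝ :=
  !![-γr, -k₁, k₂; kp, -γp, 0; 0, -1, 0]

theorem mem_spectrum_piClosedLoopMatrix_iff (γr γp kp k₁ k₂ : ℝ) (w : ℂ) :
    w ∈ spectrum ℂ ((piClosedLoopMatrix γr γp kp k₁ k₂).map Complex.ofReal) ↔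
      w ^ 3 + (γr + γp : ℝ) * w ^ 2 + (γp * γr + kp * k₁ : ℝ) * w + (kp * k₂ : ℝ) = 0 := by
  rw [Matrix.mem_spectrum_iff_isRoot_charpoly, Polynomial.IsRoot, Matrix.eval_charpoly,
    Matrix.det_fin_three]
  congr! 1
  simp only [piClosedLoopMatrix, scalar_apply, Matrix.sub_apply, map_apply, of_apply, cons_val',
    cons_val_zero, cons_val_one, cons_val, cons_val_fin_one, diagonal_apply_eq, diagonal_apply_ne,
    ne_eq, Fin.reduceEq, not_false_eq_true, Complex.ofReal_neg, Complex.ofReal_zero,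
    Complex.ofReal_one, Complex.ofReal_add, Complex.ofReal_mul]
  ring

theorem routhHurwitzCubic_piClosedLoop_iff {γr γp kp : ℝ} (hγr : 0 < γr) (hγp : 0 < γp)
    (hkp : 0 < kp) (k₁ k₂ : ℝ) :
    RouthHurwitzCubic (γr + γp) (γp * γr + kp * k₁) (kp * k₂) ↔
      0 < k₂ ∧ k₂ / (γp + γr) - γp * γr / kp < k₁ := by
  have hsum : 0 < γp + γr := by linarith
  have hgain : k₂ / (γp + γr) - γp * γr / kp < k₁ ↔
      kp * k₂ < (γr + γp) * (γp * γr + kp * k₁) := by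
    rw [div_sub_div _ _ hsum.ne' hkp.ne', div_lt_iff₀ (by positivity)]
    constructor <;> intro h <;> linarith
  rw [RouthHurwitzCubic, hgain]
  constructor
  · rintro ⟨-, hk₂, h⟩
    exact ⟨pos_of_mul_pos_right hk₂ hkp.le, h⟩
  · rintro ⟨hk₂, h⟩
    exact ⟨by linarith, by positivity, h⟩

theorem stmt_4 (γr γp kp k₁ k₂ : ℝ) (hγr : 0 < γr) (hγp : 0 < γp) (hkp : 0 < kp) :
    IsHurwitz !![-γr, -k₁, k₂; kp, -γp, 0; 0, -1, 0] ↔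
      (0 < k₂ ∧ k₂ / (γp + γr) - γp * γr / kp < k₁) := by
  change IsHurwitz (piClosedLoopMatrix γr γp kp k₁ k₂) ↔ _
  simp only [IsHurwitz, mem_spectrum_piClosedLoopMatrix_iff]
  rw [forall_cubic_root_re_neg_iff, routhHurwitzCubic_piClosedLoop_iff hγr hγp hkp]
end

section
/- For any γr, γp, kp > 0 there exist k₁, k₂ ∈ ℝ such that the matrix [[-γr, -k₁, k₂], [kp, -γp, 0], [0, -1, 0]] is Hurwitz; i.e., the mean dynamics are stabilizable by PI control. -/
/-!
The closed-loop characteristic polynomial is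
`s³ + (γr + γp) s² + (γr γp + kp k₁) s + kp k₂`. Only its `s²`-coefficient is out of reach of the
gains, and since `kp ≠ 0` the other two can be assigned freely. Taking `3c = γr + γp > 0` and
matching `(s + c)³` puts all three eigenvalues at `-c`.
-/

open Matrix

open Polynomial

theorem IsHurwitz.of_charpoly_eq_pow {n : ℕ} {A : Matrix (Fin n) (Fin n) ℝ} {c : ℝ} (hc : 0 < c)
    (hA : A.charpoly = (X + C c) ^ n) : IsHurwitz A := by
  intro z hz
  rw [mem_spectrum_iff_isRoot_charpoly,
    show A.map Complex.ofReal = A.map Complex.ofRealHom from rfl, charpoly_map, hA] at hz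
  have hzc : z + c = 0 := eq_zero_of_pow_eq_zero (by simpa using hz)
  simpa [eq_neg_of_add_eq_zero_left hzc] using hc

theorem charpoly_piClosedLoop {R : Type*} [CommRing R] (γr γp kp k₁ k₂ : R) :
    (!![-γr, -k₁, k₂; kp, -γp, 0; 0, -1, 0] : Matrix (Fin 3) (Fin 3) R).charpoly =
      X ^ 3 + C (γr + γp) * X ^ 2 + C (γr * γp + kp * k₁) * X + C (kp * k₂) := by
  simp only [Matrix.charpoly, det_fin_three, charmatrix_apply, of_apply, cons_val', cons_val_zero,
    cons_val_one, cons_val, cons_val_fin_one, diagonal_apply_eq, diagonal_apply_ne, ne_eq,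
    Fin.reduceEq, not_false_eq_true, map_neg, map_zero, map_one, map_add, map_mul]
  ring

theorem stmt_5 (γr γp kp : ℝ) (hγr : 0 < γr) (hγp : 0 < γp) (hkp : 0 < kp) :
    ∃ k₁ k₂ : ℝ, IsHurwitz !![-γr, -k₁, k₂; kp, -γp, 0; 0, -1, 0] := by
  obtain ⟨c, hc, hsum⟩ : ∃ c : ℝ, 0 < c ∧ γr + γp = 3 * c :=
    ⟨(γr + γp) / 3, by positivity, by ring⟩
  refine ⟨(3 * c ^ 2 - γr * γp) / kp, c ^ 3 / kp, IsHurwitz.of_charpoly_eq_pow hc ?_⟩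
  rw [charpoly_piClosedLoop, mul_div_cancel₀ _ hkp.ne', mul_div_cancel₀ _ hkp.ne', hsum]
  simp only [map_add, map_sub, map_mul, map_pow, map_ofNat C]
  ring
end

section
/- For kp, γp > 0, the supremum of g(μ, σ²) = γp(μ - σ²)²/(kp μ σ²) over the set A = {(μ, σ²) : 0 < μ < σ² < (1 + kp/γp)μ} equals kp/(γp + kp), and this value lies in the open interval (0,1); the supremum is not attained on A. -/
/-!
Writing `t = σ² / μ`, the function becomes `g(μ, σ²) = (γp / kp) · (t - 1)² / t`, and `A` corresponds
exactly to `1 < t < 1 + kp / γp`. Since `t ↦ (t - 1)² / t = t - 2 + 1 / t` is strictly increasing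
on `[1, ∞)`, the supremum over `A` is the value at the excluded endpoint `t = 1 + kp / γp`,
namely `kp / (γp + kp)`, and it is not attained.
-/

open Set Filter

theorem StrictMonoOn.isLUB_image_Ioo {α β : Type*} [LinearOrder α] [TopologicalSpace α]
    [OrderTopology α] [DenselyOrdered α] [PartialOrder β] [TopologicalSpace β]
    [OrderClosedTopology β] {f : α → β} {a b : α} (hab : a < b) (hf : StrictMonoOn f (Ioc a b))
    (hcont : ContinuousWithinAt f (Ioo a b) b) :
    IsLUB (f '' Ioo a b) (f b) ∧ f b ∉ f '' Ioo a b := by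
  refine ⟨(isLUB_Ioo hab).isLUB_of_tendsto ((hf.mono Ioo_subset_Ioc_self).monotoneOn)
    (nonempty_Ioo.2 hab) hcont, ?_⟩
  rintro ⟨t, ht, hft⟩
  exact (hf (Ioo_subset_Ioc_self ht) (right_mem_Ioc.2 hab) ht.2).ne hft

theorem strictMonoOn_sq_sub_one_div : StrictMonoOn (fun t : ℝ => (t - 1) ^ 2 / t) (Ici 1) := by
  intro s (hs : 1 ≤ s) t (ht : 1 ≤ t) hst
  have hst_gt_one : 1 < s * t := by nlinarith
  rw [div_lt_div_iff₀ (by linarith) (by linarith)]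
  nlinarith [mul_pos (sub_pos.2 hst) (sub_pos.2 hst_gt_one)]

theorem image_eq_image_ratio (kp γp c : ℝ) :
    (fun p : ℝ × ℝ => γp * (p.1 - p.2) ^ 2 / (kp * p.1 * p.2)) ''
        {p | 0 < p.1 ∧ p.1 < p.2 ∧ p.2 < c * p.1} =
      (fun t => γp / kp * ((t - 1) ^ 2 / t)) '' Ioo 1 c := by
  ext y
  constructor
  · rintro ⟨⟨μ, σ⟩, ⟨hμ, hμσ, hσc⟩, rfl⟩
    refine ⟨σ / μ, ⟨(one_lt_div hμ).2 hμσ, (div_lt_iff₀ hμ).2 hσc⟩, ?_⟩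
    have hσ : σ ≠ 0 := (hμ.trans hμσ).ne'
    field_simp
    ring
  · rintro ⟨t, ⟨h1t, htc⟩, rfl⟩
    exact ⟨(1, t), ⟨one_pos, h1t, by simpa using htc⟩, by simp only; ring⟩

theorem stmt_16 (kp γp : ℝ) (hkp : 0 < kp) (hγp : 0 < γp)
    (A : Set (ℝ × ℝ))
    (hA : A = {p | 0 < p.1 ∧ p.1 < p.2 ∧ p.2 < (1 + kp / γp) * p.1})
    (g : ℝ × ℝ → ℝ)
    (hg : ∀ p : ℝ × ℝ, g p = γp * (p.1 - p.2) ^ 2 / (kp * p.1 * p.2)) :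
    IsLUB (g '' A) (kp / (γp + kp)) ∧
    kp / (γp + kp) ∈ Set.Ioo (0 : ℝ) 1 ∧
    kp / (γp + kp) ∉ g '' A := by
  set c := 1 + kp / γp
  set φ : ℝ → ℝ := fun t => γp / kp * ((t - 1) ^ 2 / t)
  have hc : 1 < c := lt_add_of_pos_right 1 (div_pos hkp hγp)
  have himage : g '' A = φ '' Ioo 1 c := by
    rw [hA, ← image_eq_image_ratio, show g = _ from funext hg]
  have hφc : φ c = kp / (γp + kp) := by
    simp only [φ, c]
    field_simp
    ring
  have hmono : StrictMonoOn φ (Ioc 1 c) := fun s hs t ht hst =>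
    mul_lt_mul_of_pos_left (strictMonoOn_sq_sub_one_div hs.1.le ht.1.le hst) (div_pos hγp hkp)
  have hcont : ContinuousWithinAt φ (Ioo 1 c) c :=
    ContinuousAt.continuousWithinAt (by fun_prop (disch := positivity))
  obtain ⟨hlub, hnot_mem⟩ := hmono.isLUB_image_Ioo hc hcont
  rw [hφc] at hlub hnot_mem
  rw [himage]
  exact ⟨hlub, ⟨by positivity, (div_lt_one (by positivity)).2 (lt_add_of_pos_left kp hγp)⟩,
    hnot_mem⟩
end
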